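/- Second (temporal) Bianchi identity for the Riemannian spatial connection (equation (3.15)): for all l, h, i, j ∈ {1,2,3}, on U, bar R^l_{h ij|0} + bar R^l_{h 0i|j} − bar R^l_{h 0j|i} + bar R^l_{h ik} K^k_j − bar R^l_{h jk} K^k_i + a_j bar R^l_{h 0i} − a_i bar R^l_{h 0j} = 0. -/

import Mathlib

noncomputable section

/-- Points of the spacetime coordinate domain `U ⊆ ℝ⁴`. -/
abbrev Pt : Type := Fin 4 → ℝ

/-- Scalar fields on `ℝ⁴`. -/
abbrev SF : Type := Pt → ℝ

/-- Partial derivative `∂_a f` in the `x^a`-coordinate direction. -/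
def pd (a : Fin 4) (f : SF) : SF := fun x => fderiv ℝ f x (Pi.single a 1)

/-- Threading derivative `δ_i f = ∂_i f − A_i ∂_0 f`. -/
def sd (A : Fin 3 → SF) (i : Fin 3) (f : SF) : SF := fun x =>
  pd i.succ f x - A i x * pd 0 f x

/-- `A_i = −Φ⁻² ξ_i`. -/
def Acoef (Φ : SF) (ξ : Fin 3 → SF) (i : Fin 3) : SF := fun x => -(Φ x ^ 2)⁻¹ * ξ i x

/-- vorticity `ω_{ij} = ½ (δ_i A_j − δ_j A_i)`. -/
def vort (A : Fin 3 → SF) (i j : Fin 3) : SF := fun x =>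
  (1 / 2) * (sd A i (A j) x - sd A j (A i) x)

/-- `a_i = −∂_0 A_i`. -/
def aco (A : Fin 3 → SF) (i : Fin 3) : SF := fun x => -pd 0 (A i) x

/-- `c_i = Φ⁻¹ δ_i Φ`. -/
def cco (Φ : SF) (A : Fin 3 → SF) (i : Fin 3) : SF := fun x => (Φ x)⁻¹ * sd A i Φ x

/-- `b_i = a_i + c_i`. -/
def bco (Φ : SF) (A : Fin 3 → SF) (i : Fin 3) : SF := fun x => aco A i x + cco Φ A i x

/-- `Ψ = Φ⁻¹ ∂_0 Φ`. -/
def PsiF (Φ : SF) : SF := fun x => (Φ x)⁻¹ * pd 0 Φ x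

/-- inverse entries `ḡ^{ij}` of the spatial metric. -/
def ginv (gb : Fin 3 → Fin 3 → SF) (i j : Fin 3) : SF := fun x =>
  (Matrix.of fun a b => gb a b x)⁻¹ i j

/-- expansion tensor `Θ_{ij} = ½ ∂_0 ḡ_{ij}`. -/
def Th (gb : Fin 3 → Fin 3 → SF) (i j : Fin 3) : SF := fun x => (1 / 2) * pd 0 (gb i j) x

/-- expansion function `Θ = ḡ^{ij} Θ_{ij}`. -/
def ExpF (gb : Fin 3 → Fin 3 → SF) : SF := fun x => ∑ i, ∑ j, ginv gb i j x * Th gb i j x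

/-- shear `σ_{ij} = Θ_{ij} − ⅓ Θ ḡ_{ij}`. -/
def shear (gb : Fin 3 → Fin 3 → SF) (i j : Fin 3) : SF := fun x =>
  Th gb i j x - (1 / 3) * ExpF gb x * gb i j x

/-- extrinsic curvature `K_{ij} = Θ_{ij} + Φ² ω_{ij}`. -/
def Kt (Φ : SF) (A : Fin 3 → SF) (gb : Fin 3 → Fin 3 → SF) (i j : Fin 3) : SF := fun x =>
  Th gb i j x + Φ x ^ 2 * vort A i j x

/-- `K^h_i = ḡ^{hm} K_{mi}`. -/
def Km (Φ : SF) (A : Fin 3 → SF) (gb : Fin 3 → Fin 3 → SF) (h i : Fin 3) : SF := fun x =>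
  ∑ m, ginv gb h m x * Kt Φ A gb m i x

/-- coefficients `Γ̄^k_{ij}` of the Riemannian spatial connection. -/
def Gamb (A : Fin 3 → SF) (gb : Fin 3 → Fin 3 → SF) (k i j : Fin 3) : SF := fun x =>
  (1 / 2) * ∑ h, ginv gb k h x *
    (sd A i (gb h j) x + sd A j (gb h i) x - sd A h (gb i j) x)

/-- curvature `R̄^h_{i jk}` of the Riemannian spatial connection. -/
def barR (Φ : SF) (A : Fin 3 → SF) (gb : Fin 3 → Fin 3 → SF) (h i j k : Fin 3) : SF := fun x =>
  sd A k (Gamb A gb h i j) x - sd A j (Gamb A gb h i k) x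
    + (∑ l, (Gamb A gb l i j x * Gamb A gb h l k x - Gamb A gb l i k x * Gamb A gb h l j x))
    - 2 * Km Φ A gb h i x * vort A j k x

/-- spatial covariant derivative `K^h_{i|k}`. -/
def Kcov (Φ : SF) (A : Fin 3 → SF) (gb : Fin 3 → Fin 3 → SF) (h i k : Fin 3) : SF := fun x =>
  sd A k (Km Φ A gb h i) x
    + ∑ l, (Km Φ A gb l i x * Gamb A gb h l k x - Km Φ A gb h l x * Gamb A gb l i k x)

/-- mixed curvature `R̄^h_{i 0k} = K^h_{i|k} − ∂_0 Γ̄^h_{ik} + K^h_i a_k`. -/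
def barR0 (Φ : SF) (A : Fin 3 → SF) (gb : Fin 3 → Fin 3 → SF) (h i k : Fin 3) : SF := fun x =>
  Kcov Φ A gb h i k x - pd 0 (Gamb A gb h i k) x + Km Φ A gb h i x * aco A k x

/-- lowered curvature `R̄_{il jk} = ḡ_{lh} R̄^h_{i jk}`. -/
def barRlow (Φ : SF) (A : Fin 3 → SF) (gb : Fin 3 → Fin 3 → SF) (i l j k : Fin 3) : SF := fun x =>
  ∑ h, gb l h x * barR Φ A gb h i j k x

/-- lowered mixed curvature `R̄_{il 0k} = ḡ_{lh} R̄^h_{i 0k}`. -/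
def barR0low (Φ : SF) (A : Fin 3 → SF) (gb : Fin 3 → Fin 3 → SF) (i l k : Fin 3) : SF := fun x =>
  ∑ h, gb l h x * barR0 Φ A gb h i k x

/-- spatial covariant derivative `R̄^l_{h ij|k}`. -/
def barRcov (Φ : SF) (A : Fin 3 → SF) (gb : Fin 3 → Fin 3 → SF) (l h i j k : Fin 3) : SF :=
  fun x =>
  sd A k (barR Φ A gb l h i j) x
    + ∑ m, (barR Φ A gb m h i j x * Gamb A gb l m k x
        - barR Φ A gb l m i j x * Gamb A gb m h k x
        - barR Φ A gb l h m j x * Gamb A gb m i k x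
        - barR Φ A gb l h i m x * Gamb A gb m j k x)

/-- temporal covariant derivative `R̄^l_{h ij|0}`. -/
def barRcov0 (Φ : SF) (A : Fin 3 → SF) (gb : Fin 3 → Fin 3 → SF) (l h i j : Fin 3) : SF :=
  fun x =>
  pd 0 (barR Φ A gb l h i j) x
    + ∑ m, (barR Φ A gb m h i j x * Km Φ A gb l m x
        - barR Φ A gb l m i j x * Km Φ A gb m h x
        - barR Φ A gb l h m j x * Km Φ A gb m i x
        - barR Φ A gb l h i m x * Km Φ A gb m j x)

/-- spatial covariant derivative `R̄^l_{h 0i|j}`. -/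
def barR0cov (Φ : SF) (A : Fin 3 → SF) (gb : Fin 3 → Fin 3 → SF) (l h i j : Fin 3) : SF :=
  fun x =>
  sd A j (barR0 Φ A gb l h i) x
    + ∑ m, (barR0 Φ A gb m h i x * Gamb A gb l m j x
        - barR0 Φ A gb l m i x * Gamb A gb m h j x
        - barR0 Φ A gb l h m x * Gamb A gb m i j x)

/-- spatial covariant derivative `K_{ij|k}`. -/
def Ktcov (Φ : SF) (A : Fin 3 → SF) (gb : Fin 3 → Fin 3 → SF) (i j k : Fin 3) : SF := fun x =>
  sd A k (Kt Φ A gb i j) x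
    - ∑ h, (Kt Φ A gb h j x * Gamb A gb h i k x + Kt Φ A gb i h x * Gamb A gb h j k x)

/-- temporal covariant derivative `K_{ik|0}`. -/
def Ktcov0 (Φ : SF) (A : Fin 3 → SF) (gb : Fin 3 → Fin 3 → SF) (i k : Fin 3) : SF := fun x =>
  pd 0 (Kt Φ A gb i k) x
    - ∑ h, (Kt Φ A gb h k x * Km Φ A gb h i x + Kt Φ A gb i h x * Km Φ A gb h k x)

/-- spatial covariant derivative `b_{i|k} = δ_k b_i − b_h Γ̄^h_{ik}`. -/
def bcov (Φ : SF) (A : Fin 3 → SF) (gb : Fin 3 → Fin 3 → SF) (i k : Fin 3) : SF := fun x =>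
  sd A k (bco Φ A i) x - ∑ h, bco Φ A h x * Gamb A gb h i k x

/-- `σ² = ḡ^{hi} ḡ^{kj} σ_{hk} σ_{ij}`. -/
def sigma2 (gb : Fin 3 → Fin 3 → SF) : SF := fun x =>
  ∑ h, ∑ i, ∑ k, ∑ j, ginv gb h i x * ginv gb k j x * shear gb h k x * shear gb i j x

/-- `ω² = ḡ^{hi} ḡ^{kj} ω_{hk} ω_{ij}`. -/
def omega2 (A : Fin 3 → SF) (gb : Fin 3 → Fin 3 → SF) : SF := fun x =>
  ∑ h, ∑ i, ∑ k, ∑ j, ginv gb h i x * ginv gb k j x * vort A h k x * vort A i j x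

/-- `b² = ḡ^{kh} b_k b_h`. -/
def bsq (Φ : SF) (A : Fin 3 → SF) (gb : Fin 3 → Fin 3 → SF) : SF := fun x =>
  ∑ k, ∑ h, ginv gb k h x * bco Φ A k x * bco Φ A h x

/-- `b^k = ḡ^{kh} b_h`. -/
def bup (Φ : SF) (A : Fin 3 → SF) (gb : Fin 3 → Fin 3 → SF) (k : Fin 3) : SF := fun x =>
  ∑ h, ginv gb k h x * bco Φ A h x

/-- divergence `b^k_{|k} = δ_k b^k + b^l Γ̄^k_{lk}`. -/
def bdiv (Φ : SF) (A : Fin 3 → SF) (gb : Fin 3 → Fin 3 → SF) : SF := fun x =>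
  ∑ k, (sd A k (bup Φ A gb k) x + ∑ l, bup Φ A gb l x * Gamb A gb k l k x)

/-- spatial Ricci tensor `R̄_{ij} = ½(R̄^k_{i jk} + R̄^k_{j ik})`. -/
def barRic (Φ : SF) (A : Fin 3 → SF) (gb : Fin 3 → Fin 3 → SF) (i j : Fin 3) : SF := fun x =>
  (1 / 2) * ((∑ k, barR Φ A gb k i j k x) + ∑ k, barR Φ A gb k j i k x)

/-- spatial scalar curvature `R̄ = ḡ^{ij} R̄_{ij}`. -/
def barScal (Φ : SF) (A : Fin 3 → SF) (gb : Fin 3 → Fin 3 → SF) : SF := fun x =>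
  ∑ i, ∑ j, ginv gb i j x * barRic Φ A gb i j x

/-! ### 4-dimensional (spacetime) objects -/

/-- inverse entries `g^{ab}` of a spacetime metric. -/
def mginv (g : Fin 4 → Fin 4 → SF) (a b : Fin 4) : SF := fun x =>
  (Matrix.of fun c d => g c d x)⁻¹ a b

/-- Christoffel symbols `Γ^c_{ab}` of a spacetime metric. -/
def Chr (g : Fin 4 → Fin 4 → SF) (c a b : Fin 4) : SF := fun x =>
  (1 / 2) * ∑ d, mginv g c d x * (pd a (g d b) x + pd b (g d a) x - pd d (g a b) x)

/-- curvature `R^d_{c ab}` of a spacetime metric. -/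
def Riem (g : Fin 4 → Fin 4 → SF) (d c a b : Fin 4) : SF := fun x =>
  pd a (Chr g d c b) x - pd b (Chr g d c a) x
    + ∑ e, (Chr g e c b x * Chr g d e a x - Chr g e c a x * Chr g d e b x)

/-- lowered curvature `R_{dc ab} = g_{de} R^e_{c ab}`. -/
def RiemLow (g : Fin 4 → Fin 4 → SF) (d c a b : Fin 4) : SF := fun x =>
  ∑ e, g d e x * Riem g e c a b x

/-- Ricci tensor `Ric_{cb} = R^a_{c ab}`. -/
def Ricc (g : Fin 4 → Fin 4 → SF) (c b : Fin 4) : SF := fun x => ∑ a, Riem g a c a b x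

/-- scalar curvature `𝐑 = g^{ab} Ric_{ab}`. -/
def Scal (g : Fin 4 → Fin 4 → SF) : SF := fun x => ∑ a, ∑ b, mginv g a b x * Ricc g a b x

/-- Einstein tensor `G_{ab} = Ric_{ab} − ½ 𝐑 g_{ab}`. -/
def Einst (g : Fin 4 → Fin 4 → SF) (a b : Fin 4) : SF := fun x =>
  Ricc g a b x - (1 / 2) * Scal g x * g a b x

/-- the spacetime metric determined by `Φ, ξ_i, ḡ_{ij}`:
`g_{00} = −Φ²`, `g_{0i} = g_{i0} = ξ_i`, `g_{ij} = ḡ_{ij} − Φ⁻² ξ_i ξ_j`. -/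
def gmet (Φ : SF) (ξ : Fin 3 → SF) (gb : Fin 3 → Fin 3 → SF) (a b : Fin 4) : SF := fun x =>
  Fin.cases
    (Fin.cases (-(Φ x ^ 2)) (fun j => ξ j x) b)
    (fun i => Fin.cases (ξ i x) (fun j => gb i j x - (Φ x ^ 2)⁻¹ * ξ i x * ξ j x) b) a

/-- the threading frame: `e_0^a = δ^a_0`, `e_i^a = δ^a_i − A_i δ^a_0`. -/
def frameV (Φ : SF) (ξ : Fin 3 → SF) (P : Fin 4) (x : Pt) (a : Fin 4) : ℝ :=
  Fin.cases ((if a = 0 then (1 : ℝ) else 0))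
    (fun i => (if a = i.succ then (1 : ℝ) else 0)
      - Acoef Φ ξ i x * (if a = 0 then (1 : ℝ) else 0)) P

/-- frame components `R_{PQ ST} = e_Q^d e_P^c e_T^a e_S^b R_{dc ab}` of the curvature. -/
def RiemF (Φ : SF) (ξ : Fin 3 → SF) (gb : Fin 3 → Fin 3 → SF) (P Q S T : Fin 4) : SF := fun x =>
  ∑ d, ∑ c, ∑ a, ∑ b,
    frameV Φ ξ Q x d * frameV Φ ξ P x c * frameV Φ ξ T x a * frameV Φ ξ S x b *
      RiemLow (gmet Φ ξ gb) d c a b x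


open scoped ContDiff

/-- smooth on U -/
def Sm (U : Set Pt) (f : SF) : Prop := ContDiffOn ℝ ∞ f U

namespace Sm

variable {U : Set Pt} {f g : SF} {c : ℝ} {x : Pt} {a b : Fin 4}

theorem add (hf : Sm U f) (hg : Sm U g) : Sm U (fun y => f y + g y) := ContDiffOn.add hf hg
theorem sub (hf : Sm U f) (hg : Sm U g) : Sm U (fun y => f y - g y) := ContDiffOn.sub hf hg
theorem mul (hf : Sm U f) (hg : Sm U g) : Sm U (fun y => f y * g y) := ContDiffOn.mul hf hg
theorem neg (hf : Sm U f) : Sm U (fun y => -f y) := ContDiffOn.neg hf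
theorem const : Sm U (fun _ => c) := contDiffOn_const
theorem const_mul (hf : Sm U f) : Sm U (fun y => c * f y) := ContDiffOn.mul contDiffOn_const hf

theorem diffAt (hU : IsOpen U) (hf : Sm U f) (hx : x ∈ U) : DifferentiableAt ℝ f x :=
  ((hf x hx).contDiffAt (hU.mem_nhds hx)).differentiableAt (by norm_num)

theorem pd (hU : IsOpen U) (hf : Sm U f) (a : Fin 4) : Sm U (_root_.pd a f) := by
  have h := ((contDiffOn_infty_iff_fderiv_of_isOpen hU).1 hf).2
  exact h.clm_apply contDiffOn_const

end Sm

section pdlemmas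

variable {U : Set Pt} {f g : SF} {c : ℝ} {x : Pt} {a b : Fin 4}

theorem pd_add (hU : IsOpen U) (hx : x ∈ U) (hf : Sm U f) (hg : Sm U g) :
    pd a (fun y => f y + g y) x = pd a f x + pd a g x := by
  unfold pd
  rw [fderiv_fun_add (hf.diffAt hU hx) (hg.diffAt hU hx)]; rfl

theorem pd_sub (hU : IsOpen U) (hx : x ∈ U) (hf : Sm U f) (hg : Sm U g) :
    pd a (fun y => f y - g y) x = pd a f x - pd a g x := by
  unfold pd
  rw [fderiv_fun_sub (hf.diffAt hU hx) (hg.diffAt hU hx)]; rfl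

theorem pd_mul (hU : IsOpen U) (hx : x ∈ U) (hf : Sm U f) (hg : Sm U g) :
    pd a (fun y => f y * g y) x = pd a f x * g x + f x * pd a g x := by
  unfold pd
  rw [fderiv_fun_mul (hf.diffAt hU hx) (hg.diffAt hU hx)]
  simp [ContinuousLinearMap.add_apply, ContinuousLinearMap.smul_apply]
  ring

theorem pd_neg : pd a (fun y => -f y) x = -pd a f x := by
  unfold pd; rw [fderiv_fun_neg]; rfl

theorem pd_const : pd a (fun _ => c) x = 0 := by
  unfold pd; rw [fderiv_const_apply]; rfl

theorem pd_const_mul (hU : IsOpen U) (hx : x ∈ U) (hf : Sm U f) :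
    pd a (fun y => c * f y) x = c * pd a f x := by
  unfold pd
  rw [fderiv_const_mul (hf.diffAt hU hx)]; rfl

theorem pd_congr (hU : IsOpen U) (hx : x ∈ U) (h : Set.EqOn f g U) :
    pd a f x = pd a g x := by
  unfold pd
  rw [Filter.EventuallyEq.fderiv_eq (Filter.eventuallyEq_of_mem (hU.mem_nhds hx) h)]

theorem pd_snd (hU : IsOpen U) (hx : x ∈ U) (hf : Sm U f) :
    pd a (pd b f) x = fderiv ℝ (fderiv ℝ f) x (Pi.single a 1) (Pi.single b 1) := by
  have hd' : ContDiffOn ℝ ∞ (fderiv ℝ f) U :=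
    ((contDiffOn_infty_iff_fderiv_of_isOpen hU).1 hf).2
  have hd : DifferentiableAt ℝ (fderiv ℝ f) x :=
    ((hd' x hx).contDiffAt (hU.mem_nhds hx)).differentiableAt (by norm_num)
  show fderiv ℝ (fun y => (fderiv ℝ f y) (Pi.single b 1)) x (Pi.single a 1) = _
  rw [fderiv_clm_apply hd (differentiableAt_const _)]
  simp

theorem pd_comm (hU : IsOpen U) (hx : x ∈ U) (hf : Sm U f) :
    pd a (pd b f) x = pd b (pd a f) x := by
  rw [pd_snd hU hx hf, pd_snd hU hx hf]
  have hsym : IsSymmSndFDerivAt ℝ f x :=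
    ((hf x hx).contDiffAt (hU.mem_nhds hx)).isSymmSndFDerivAt (by rw [minSmoothness_of_isRCLikeNormedField]; exact WithTop.coe_le_coe.mpr le_top)
  exact hsym _ _

theorem Sm_sum3 {U : Set Pt} {F : Fin 3 → SF} (hF : ∀ l, Sm U (F l)) :
    Sm U (fun x => ∑ l, F l x) := by
  simp only [Fin.sum_univ_three]
  exact ((hF 0).add (hF 1)).add (hF 2)

end pdlemmas

/-- symmetrized second derivative -/
def symD (a b : Fin 4) (f : SF) : SF := fun x =>
  (1 / 2) * (pd a (pd b f) x + pd b (pd a f) x)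

/-- structurally symmetrized connection coefficients -/
def GP (Hf : Fin 3 → Fin 3 → Fin 3 → SF) (k i j : Fin 3) : SF := fun x =>
  Hf k i j x + Hf k j i x

def Gq (G : Fin 3 → Fin 3 → Fin 3 → SF) (h i j k : Fin 3) : SF := fun x =>
  ∑ l, (G l i j x * G h l k x - G l i k x * G h l j x)

def Kq (G : Fin 3 → Fin 3 → Fin 3 → SF) (K : Fin 3 → Fin 3 → SF) (h i k : Fin 3) : SF := fun x =>
  ∑ l, (K l i x * G h l k x - K h l x * G l i k x)

def Kv (A : Fin 3 → SF) (K : Fin 3 → Fin 3 → SF) (h i j k : Fin 3) : SF := fun x =>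
  2 * K h i x * vort A j k x

def barRP (A : Fin 3 → SF) (G : Fin 3 → Fin 3 → Fin 3 → SF) (K : Fin 3 → Fin 3 → SF)
    (h i j k : Fin 3) : SF := fun x =>
  sd A k (G h i j) x - sd A j (G h i k) x + Gq G h i j k x - Kv A K h i j k x

def KcovP (A : Fin 3 → SF) (G : Fin 3 → Fin 3 → Fin 3 → SF) (K : Fin 3 → Fin 3 → SF)
    (h i k : Fin 3) : SF := fun x =>
  sd A k (K h i) x + Kq G K h i k x

def barR0P (A : Fin 3 → SF) (G : Fin 3 → Fin 3 → Fin 3 → SF) (K : Fin 3 → Fin 3 → SF)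
    (h i k : Fin 3) : SF := fun x =>
  KcovP A G K h i k x - pd 0 (G h i k) x + K h i x * aco A k x

def barRcov0P (A : Fin 3 → SF) (G : Fin 3 → Fin 3 → Fin 3 → SF) (K : Fin 3 → Fin 3 → SF)
    (l h i j : Fin 3) : SF := fun x =>
  pd 0 (barRP A G K l h i j) x
    + ∑ m, (barRP A G K m h i j x * K l m x
        - barRP A G K l m i j x * K m h x
        - barRP A G K l h m j x * K m i x
        - barRP A G K l h i m x * K m j x)

def barR0covP (A : Fin 3 → SF) (G : Fin 3 → Fin 3 → Fin 3 → SF) (K : Fin 3 → Fin 3 → SF)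
    (l h i j : Fin 3) : SF := fun x =>
  sd A j (barR0P A G K l h i) x
    + ∑ m, (barR0P A G K m h i x * G l m j x
        - barR0P A G K l m i x * G m h j x
        - barR0P A G K l h m x * G m i j x)

section smooth

variable {U : Set Pt} {A : Fin 3 → SF} {Hf : Fin 3 → Fin 3 → Fin 3 → SF}
  {K : Fin 3 → Fin 3 → SF} {f : SF}

theorem Sm_sd (hU : IsOpen U) (hA : ∀ i, Sm U (A i)) (hf : Sm U f) (i : Fin 3) :
    Sm U (sd A i f) := ((hf.pd hU _).sub ((hA i).mul (hf.pd hU _)))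

theorem Sm_vort (hU : IsOpen U) (hA : ∀ i, Sm U (A i)) (i j : Fin 3) :
    Sm U (vort A i j) :=
  Sm.const_mul ((Sm_sd hU hA (hA j) i).sub (Sm_sd hU hA (hA i) j))

theorem Sm_aco (hU : IsOpen U) (hA : ∀ i, Sm U (A i)) (i : Fin 3) : Sm U (aco A i) :=
  Sm.neg ((hA i).pd hU _)

theorem Sm_GP (hHf : ∀ k i j, Sm U (Hf k i j)) (k i j : Fin 3) : Sm U (GP Hf k i j) :=
  (hHf k i j).add (hHf k j i)

theorem Sm_Gq (hHf : ∀ k i j, Sm U (Hf k i j)) (h i j k : Fin 3) : Sm U (Gq (GP Hf) h i j k) := by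
  unfold Gq
  simp only [Fin.sum_univ_three]
  exact (((((Sm_GP hHf 0 i j).mul (Sm_GP hHf h 0 k)).sub ((Sm_GP hHf 0 i k).mul (Sm_GP hHf h 0 j))).add
      (((Sm_GP hHf 1 i j).mul (Sm_GP hHf h 1 k)).sub ((Sm_GP hHf 1 i k).mul (Sm_GP hHf h 1 j)))).add
      (((Sm_GP hHf 2 i j).mul (Sm_GP hHf h 2 k)).sub ((Sm_GP hHf 2 i k).mul (Sm_GP hHf h 2 j))))

theorem Sm_Kq (hHf : ∀ k i j, Sm U (Hf k i j)) (hK : ∀ h i, Sm U (K h i)) (h i k : Fin 3) :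
    Sm U (Kq (GP Hf) K h i k) := by
  unfold Kq
  simp only [Fin.sum_univ_three]
  exact ((((hK 0 i).mul (Sm_GP hHf h 0 k)).sub ((hK h 0).mul (Sm_GP hHf 0 i k))).add
      (((hK 1 i).mul (Sm_GP hHf h 1 k)).sub ((hK h 1).mul (Sm_GP hHf 1 i k)))).add
      (((hK 2 i).mul (Sm_GP hHf h 2 k)).sub ((hK h 2).mul (Sm_GP hHf 2 i k)))

theorem Sm_Kv (hU : IsOpen U) (hA : ∀ i, Sm U (A i)) (hK : ∀ h i, Sm U (K h i))
    (h i j k : Fin 3) : Sm U (Kv A K h i j k) :=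
  (Sm.const_mul (hK h i)).mul (Sm_vort hU hA j k)

theorem Sm_barRP (hU : IsOpen U) (hA : ∀ i, Sm U (A i)) (hHf : ∀ k i j, Sm U (Hf k i j))
    (hK : ∀ h i, Sm U (K h i)) (h i j k : Fin 3) : Sm U (barRP A (GP Hf) K h i j k) :=
  (((Sm_sd hU hA (Sm_GP hHf h i j) k).sub (Sm_sd hU hA (Sm_GP hHf h i k) j)).add
    (Sm_Gq hHf h i j k)).sub (Sm_Kv hU hA hK h i j k)

theorem Sm_KcovP (hU : IsOpen U) (hA : ∀ i, Sm U (A i)) (hHf : ∀ k i j, Sm U (Hf k i j))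
    (hK : ∀ h i, Sm U (K h i)) (h i k : Fin 3) : Sm U (KcovP A (GP Hf) K h i k) :=
  (Sm_sd hU hA (hK h i) k).add (Sm_Kq hHf hK h i k)

theorem Sm_barR0P (hU : IsOpen U) (hA : ∀ i, Sm U (A i)) (hHf : ∀ k i j, Sm U (Hf k i j))
    (hK : ∀ h i, Sm U (K h i)) (h i k : Fin 3) : Sm U (barR0P A (GP Hf) K h i k) :=
  ((Sm_KcovP hU hA hHf hK h i k).sub ((Sm_GP hHf h i k).pd hU 0)).add
    ((hK h i).mul (Sm_aco hU hA k))

end smooth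

section formulas

variable {U : Set Pt} {x : Pt} {A : Fin 3 → SF} {Hf : Fin 3 → Fin 3 → Fin 3 → SF}
  {K : Fin 3 → Fin 3 → SF} {f : SF} {a b : Fin 4}

theorem pd_pd_eq_symD (hU : IsOpen U) (hx : x ∈ U) (hf : Sm U f) :
    pd a (pd b f) x = symD a b f x := by
  unfold symD
  rw [← pd_comm hU hx hf]
  ring

theorem pd_GP (hU : IsOpen U) (hx : x ∈ U) (hHf : ∀ k i j, Sm U (Hf k i j)) (a : Fin 4)
    (k i j : Fin 3) :
    pd a (GP Hf k i j) x = pd a (Hf k i j) x + pd a (Hf k j i) x := by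
  unfold GP
  exact pd_add hU hx (hHf k i j) (hHf k j i)

theorem symD_GP (hU : IsOpen U) (hx : x ∈ U) (hHf : ∀ k i j, Sm U (Hf k i j)) (a b : Fin 4)
    (k i j : Fin 3) :
    symD a b (GP Hf k i j) x = symD a b (Hf k i j) x + symD a b (Hf k j i) x := by
  unfold symD
  have e1 : pd a (pd b (GP Hf k i j)) x
      = pd a (fun y => pd b (Hf k i j) y + pd b (Hf k j i) y) x := by
    refine pd_congr hU hx (fun y hy => ?_)
    exact pd_GP hU hy hHf b k i j
  have e2 : pd b (pd a (GP Hf k i j)) x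
      = pd b (fun y => pd a (Hf k i j) y + pd a (Hf k j i) y) x := by
    refine pd_congr hU hx (fun y hy => ?_)
    exact pd_GP hU hy hHf a k i j
  rw [e1, e2, pd_add hU hx (((hHf k i j).pd hU _)) (((hHf k j i).pd hU _)),
    pd_add hU hx (((hHf k i j).pd hU _)) (((hHf k j i).pd hU _))]
  ring

theorem pd_vort (hU : IsOpen U) (hx : x ∈ U) (hA : ∀ i, Sm U (A i)) (a : Fin 4) (i j : Fin 3) :
    pd a (vort A i j) x = (1 / 2) * (symD a i.succ (A j) x - pd a (A i) x * pd 0 (A j) x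
      - A i x * symD a 0 (A j) x - symD a j.succ (A i) x + pd a (A j) x * pd 0 (A i) x
      + A j x * symD a 0 (A i) x) := by
  have d : ∀ (g : SF), Sm U g → ∀ b : Fin 4, Sm U (pd b g) := fun g hg b => hg.pd hU b
  unfold vort sd
  rw [pd_const_mul hU hx (by
    exact ((d _ (hA j) _).sub ((hA i).mul (d _ (hA j) _))).sub
      ((d _ (hA i) _).sub ((hA j).mul (d _ (hA i) _))))]
  rw [pd_sub hU hx ((d _ (hA j) _).sub ((hA i).mul (d _ (hA j) _)))
    ((d _ (hA i) _).sub ((hA j).mul (d _ (hA i) _)))]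
  rw [pd_sub hU hx (d _ (hA j) _) ((hA i).mul (d _ (hA j) _))]
  rw [pd_sub hU hx (d _ (hA i) _) ((hA j).mul (d _ (hA i) _))]
  rw [pd_mul hU hx (hA i) (d _ (hA j) _), pd_mul hU hx (hA j) (d _ (hA i) _)]
  rw [pd_pd_eq_symD hU hx (hA j), pd_pd_eq_symD hU hx (hA j),
    pd_pd_eq_symD hU hx (hA i), pd_pd_eq_symD hU hx (hA i)]
  ring

theorem pd_aco (hU : IsOpen U) (hx : x ∈ U) (hA : ∀ i, Sm U (A i)) (a : Fin 4) (i : Fin 3) :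
    pd a (aco A i) x = -symD a 0 (A i) x := by
  unfold aco
  rw [show (fun y => -pd 0 (A i) y) = (fun y => -(fun z => pd 0 (A i) z) y) from rfl, pd_neg]
  rw [pd_pd_eq_symD hU hx (hA i)]

end formulas

section formulas2

variable {U : Set Pt} {x : Pt} {A : Fin 3 → SF} {Hf : Fin 3 → Fin 3 → Fin 3 → SF}
  {K : Fin 3 → Fin 3 → SF} {f : SF}

theorem pd_sd (hU : IsOpen U) (hx : x ∈ U) (hA : ∀ i, Sm U (A i)) (hf : Sm U f)
    (a : Fin 4) (k : Fin 3) :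
    pd a (sd A k f) x = symD a k.succ f x - pd a (A k) x * pd 0 f x - A k x * symD a 0 f x := by
  unfold sd
  rw [pd_sub hU hx (hf.pd hU _) ((hA k).mul (hf.pd hU _)),
    pd_mul hU hx (hA k) (hf.pd hU _),
    pd_pd_eq_symD hU hx hf, pd_pd_eq_symD hU hx hf]
  ring

theorem pd_Gq (hU : IsOpen U) (hx : x ∈ U) (hHf : ∀ k i j, Sm U (Hf k i j))
    (a : Fin 4) (h i j k : Fin 3) :
    pd a (Gq (GP Hf) h i j k) x
      = ∑ l, (pd a (GP Hf l i j) x * GP Hf h l k x + GP Hf l i j x * pd a (GP Hf h l k) x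
          - pd a (GP Hf l i k) x * GP Hf h l j x - GP Hf l i k x * pd a (GP Hf h l j) x) := by
  unfold Gq
  simp only [Fin.sum_univ_three]
  simp (disch := (repeat' (first | exact hx | apply hHf | apply hK | apply hA | apply Sm_GP hHf | apply Sm.sub | apply Sm.add | apply Sm.const_mul | apply Sm.mul | apply Sm.pd hU | apply Sm.const | apply Sm_vort hU hA | apply Sm_aco hU hA)))
    only [pd_sub hU hx, pd_add hU hx, pd_mul hU hx]
  ring

theorem pd_Kq (hU : IsOpen U) (hx : x ∈ U) (hHf : ∀ k i j, Sm U (Hf k i j))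
    (hK : ∀ h i, Sm U (K h i)) (a : Fin 4) (h i k : Fin 3) :
    pd a (Kq (GP Hf) K h i k) x
      = ∑ l, (pd a (K l i) x * GP Hf h l k x + K l i x * pd a (GP Hf h l k) x
          - pd a (K h l) x * GP Hf l i k x - K h l x * pd a (GP Hf l i k) x) := by
  unfold Kq
  simp only [Fin.sum_univ_three]
  simp (disch := (repeat' (first | exact hx | apply hHf | apply hK | apply hA | apply Sm_GP hHf | apply Sm.sub | apply Sm.add | apply Sm.const_mul | apply Sm.mul | apply Sm.pd hU | apply Sm.const | apply Sm_vort hU hA | apply Sm_aco hU hA)))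
    only [pd_sub hU hx, pd_add hU hx, pd_mul hU hx]
  ring

theorem pd_Kv (hU : IsOpen U) (hx : x ∈ U) (hA : ∀ i, Sm U (A i)) (hK : ∀ h i, Sm U (K h i))
    (a : Fin 4) (h i j k : Fin 3) :
    pd a (Kv A K h i j k) x
      = 2 * pd a (K h i) x * vort A j k x + 2 * K h i x * pd a (vort A j k) x := by
  unfold Kv
  rw [pd_mul hU hx (Sm.const_mul (hK h i)) (Sm_vort hU hA j k), pd_const_mul hU hx (hK h i)]

theorem pd_barRP (hU : IsOpen U) (hx : x ∈ U) (hA : ∀ i, Sm U (A i))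
    (hHf : ∀ k i j, Sm U (Hf k i j)) (hK : ∀ h i, Sm U (K h i)) (a : Fin 4) (h i j k : Fin 3) :
    pd a (barRP A (GP Hf) K h i j k) x
      = pd a (sd A k (GP Hf h i j)) x - pd a (sd A j (GP Hf h i k)) x
        + pd a (Gq (GP Hf) h i j k) x - pd a (Kv A K h i j k) x := by
  unfold barRP
  rw [pd_sub hU hx (((Sm_sd hU hA (Sm_GP hHf h i j) k).sub (Sm_sd hU hA (Sm_GP hHf h i k) j)).add
      (Sm_Gq hHf h i j k)) (Sm_Kv hU hA hK h i j k),
    pd_add hU hx ((Sm_sd hU hA (Sm_GP hHf h i j) k).sub (Sm_sd hU hA (Sm_GP hHf h i k) j))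
      (Sm_Gq hHf h i j k),
    pd_sub hU hx (Sm_sd hU hA (Sm_GP hHf h i j) k) (Sm_sd hU hA (Sm_GP hHf h i k) j)]

theorem pd_KcovP (hU : IsOpen U) (hx : x ∈ U) (hA : ∀ i, Sm U (A i))
    (hHf : ∀ k i j, Sm U (Hf k i j)) (hK : ∀ h i, Sm U (K h i)) (a : Fin 4) (h i k : Fin 3) :
    pd a (KcovP A (GP Hf) K h i k) x
      = pd a (sd A k (K h i)) x + pd a (Kq (GP Hf) K h i k) x := by
  unfold KcovP
  rw [pd_add hU hx (Sm_sd hU hA (hK h i) k) (Sm_Kq hHf hK h i k)]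

theorem pd_barR0P (hU : IsOpen U) (hx : x ∈ U) (hA : ∀ i, Sm U (A i))
    (hHf : ∀ k i j, Sm U (Hf k i j)) (hK : ∀ h i, Sm U (K h i)) (a : Fin 4) (h i k : Fin 3) :
    pd a (barR0P A (GP Hf) K h i k) x
      = pd a (KcovP A (GP Hf) K h i k) x - symD a 0 (GP Hf h i k) x
        + pd a (K h i) x * aco A k x + K h i x * pd a (aco A k) x := by
  unfold barR0P
  rw [pd_add hU hx ((Sm_KcovP hU hA hHf hK h i k).sub ((Sm_GP hHf h i k).pd hU 0))
      ((hK h i).mul (Sm_aco hU hA k)),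
    pd_sub hU hx (Sm_KcovP hU hA hHf hK h i k) ((Sm_GP hHf h i k).pd hU 0),
    pd_mul hU hx (hK h i) (Sm_aco hU hA k),
    pd_pd_eq_symD hU hx (Sm_GP hHf h i k)]
  ring

end formulas2

section congruence

variable {U : Set Pt} {x : Pt} {A : Fin 3 → SF} {K : Fin 3 → Fin 3 → SF}
  {G1 G2 : Fin 3 → Fin 3 → Fin 3 → SF} {f g : SF}

theorem sd_congr (hU : IsOpen U) (h : Set.EqOn f g U) (m : Fin 3) (hx : x ∈ U) :
    sd A m f x = sd A m g x := by
  unfold sd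
  rw [pd_congr hU hx h, pd_congr hU hx h]

variable (hU : IsOpen U) (hG : ∀ k i j, Set.EqOn (G1 k i j) (G2 k i j) U)

include hU hG

theorem Gq_congr (h i j k : Fin 3) : Set.EqOn (Gq G1 h i j k) (Gq G2 h i j k) U := by
  intro y hy
  unfold Gq
  exact Finset.sum_congr rfl fun m _ => by
    rw [hG m i j hy, hG h m k hy, hG m i k hy, hG h m j hy]

theorem Kq_congr (h i k : Fin 3) : Set.EqOn (Kq G1 K h i k) (Kq G2 K h i k) U := by
  intro y hy
  unfold Kq
  exact Finset.sum_congr rfl fun m _ => by rw [hG h m k hy, hG m i k hy]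

theorem barRP_congr (h i j k : Fin 3) :
    Set.EqOn (barRP A G1 K h i j k) (barRP A G2 K h i j k) U := by
  intro y hy
  unfold barRP
  rw [sd_congr hU (hG h i j) k hy, sd_congr hU (hG h i k) j hy, Gq_congr hU hG h i j k hy]

theorem KcovP_congr (h i k : Fin 3) :
    Set.EqOn (KcovP A G1 K h i k) (KcovP A G2 K h i k) U := by
  intro y hy
  unfold KcovP
  rw [Kq_congr hU hG h i k hy]

theorem barR0P_congr (h i k : Fin 3) :
    Set.EqOn (barR0P A G1 K h i k) (barR0P A G2 K h i k) U := by
  intro y hy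
  unfold barR0P
  rw [KcovP_congr hU hG h i k hy, pd_congr hU hy (hG h i k)]

theorem barRcov0P_congr (l h i j : Fin 3) (hx : x ∈ U) :
    barRcov0P A G1 K l h i j x = barRcov0P A G2 K l h i j x := by
  unfold barRcov0P
  rw [pd_congr hU hx (barRP_congr hU hG l h i j)]
  congr 1
  exact Finset.sum_congr rfl fun m _ => by
    rw [barRP_congr hU hG m h i j hx, barRP_congr hU hG l m i j hx,
      barRP_congr hU hG l h m j hx, barRP_congr hU hG l h i m hx]

theorem barR0covP_congr (l h i j : Fin 3) (hx : x ∈ U) :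
    barR0covP A G1 K l h i j x = barR0covP A G2 K l h i j x := by
  unfold barR0covP
  rw [sd_congr hU (barR0P_congr hU hG l h i) j hx]
  congr 1
  exact Finset.sum_congr rfl fun m _ => by
    rw [barR0P_congr hU hG m h i hx, barR0P_congr hU hG l m i hx, barR0P_congr hU hG l h m hx,
      hG l m j hx, hG m h j hx, hG m i j hx]

end congruence

section keylemma

variable {U : Set Pt} {x : Pt} {A : Fin 3 → SF} {Hf : Fin 3 → Fin 3 → Fin 3 → SF}
  {K : Fin 3 → Fin 3 → SF}

set_option maxHeartbeats 4000000 in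
theorem keyP (hU : IsOpen U) (hA : ∀ i, Sm U (A i)) (hHf : ∀ k i j, Sm U (Hf k i j))
    (hK : ∀ h i, Sm U (K h i)) (hx : x ∈ U) (l h i j : Fin 3) :
    barRcov0P A (GP Hf) K l h i j x + barR0covP A (GP Hf) K l h i j x
      - barR0covP A (GP Hf) K l h j i x
      + (∑ k, (barRP A (GP Hf) K l h i k x * K k j x - barRP A (GP Hf) K l h j k x * K k i x))
      + aco A j x * barR0P A (GP Hf) K l h i x - aco A i x * barR0P A (GP Hf) K l h j x = 0 := by
  have psdG : ∀ (a : Fin 4) (m p q r : Fin 3), pd a (sd A m (GP Hf p q r)) x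
      = symD a m.succ (GP Hf p q r) x - pd a (A m) x * pd 0 (GP Hf p q r) x
        - A m x * symD a 0 (GP Hf p q r) x :=
    fun a m p q r => pd_sd hU hx hA (Sm_GP hHf p q r) a m
  have psdK : ∀ (a : Fin 4) (m p q : Fin 3), pd a (sd A m (K p q)) x
      = symD a m.succ (K p q) x - pd a (A m) x * pd 0 (K p q) x - A m x * symD a 0 (K p q) x :=
    fun a m p q => pd_sd hU hx hA (hK p q) a m
  unfold barRcov0P barR0covP sd
  simp only [Fin.sum_univ_three]
  simp only [pd_barRP hU hx hA hHf hK, pd_barR0P hU hx hA hHf hK, pd_KcovP hU hx hA hHf hK,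
    pd_Gq hU hx hHf, pd_Kq hU hx hHf hK, pd_Kv hU hx hA hK, psdG, psdK,
    pd_GP hU hx hHf, symD_GP hU hx hHf, pd_vort hU hx hA, pd_aco hU hx hA, Fin.sum_univ_three]
  unfold barRP barR0P KcovP Gq Kq Kv vort aco sd
  simp only [Fin.sum_univ_three, pd_GP hU hx hHf]
  unfold GP symD
  ring

end keylemma


section main

theorem stmt8_aux (U : Set Pt) (hU : IsOpen U)
    (Φ : SF) (ξ : Fin 3 → SF) (gb : Fin 3 → Fin 3 → SF)
    (hΦ : ContDiffOn ℝ (⊤ : ℕ∞) Φ U) (hΦ0 : ∀ x ∈ U, Φ x ≠ 0)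
    (hξ : ∀ i, ContDiffOn ℝ (⊤ : ℕ∞) (ξ i) U)
    (hgb : ∀ i j, ContDiffOn ℝ (⊤ : ℕ∞) (gb i j) U)
    (hpos : ∀ x ∈ U, (Matrix.of fun i j => gb i j x).PosDef) :
    ∀ x ∈ U, ∀ l h i j : Fin 3,
      barRcov0 Φ (Acoef Φ ξ) gb l h i j x
        + barR0cov Φ (Acoef Φ ξ) gb l h i j x
        - barR0cov Φ (Acoef Φ ξ) gb l h j i x
        + (∑ k, (barR Φ (Acoef Φ ξ) gb l h i k x * Km Φ (Acoef Φ ξ) gb k j x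
            - barR Φ (Acoef Φ ξ) gb l h j k x * Km Φ (Acoef Φ ξ) gb k i x))
        + aco (Acoef Φ ξ) j x * barR0 Φ (Acoef Φ ξ) gb l h i x
        - aco (Acoef Φ ξ) i x * barR0 Φ (Acoef Φ ξ) gb l h j x = 0 := by
  intro x hx l h i j
  have hΦ' : Sm U Φ := hΦ.of_le (by simp)
  have hξ' : ∀ i, Sm U (ξ i) := fun i => (hξ i).of_le (by simp)
  have hgb' : ∀ i j, Sm U (gb i j) := fun i j => (hgb i j).of_le (by simp)
  have hA : ∀ i, Sm U (Acoef Φ ξ i) := by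
    intro i
    have h2 : Sm U (fun y => Φ y ^ 2) := hΦ'.pow 2
    have h3 : Sm U (fun y => (Φ y ^ 2)⁻¹) := h2.inv (fun y hy => pow_ne_zero 2 (hΦ0 y hy))
    exact (Sm.neg h3).mul (hξ' i)
  have hdetne : ∀ y ∈ U, (Matrix.of fun a b => gb a b y).det ≠ 0 :=
    fun y hy => ((hpos y hy).det_pos).ne'
  have hdet : Sm U (fun y => (Matrix.of fun a b => gb a b y).det) := by
    have e : (fun y => (Matrix.of fun a b => gb a b y).det) = fun y =>
        gb 0 0 y * gb 1 1 y * gb 2 2 y - gb 0 0 y * gb 1 2 y * gb 2 1 y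
          - gb 0 1 y * gb 1 0 y * gb 2 2 y + gb 0 1 y * gb 1 2 y * gb 2 0 y
          + gb 0 2 y * gb 1 0 y * gb 2 1 y - gb 0 2 y * gb 1 1 y * gb 2 0 y := by
      funext y; rw [Matrix.det_fin_three]; rfl
    rw [e]
    repeat' first
    | apply Sm.sub | apply Sm.add | apply Sm.mul | exact hgb' _ _
  have hadj : ∀ a b : Fin 3, Sm U (fun y => (Matrix.of fun c d => gb c d y).adjugate a b) := by
    intro a b
    fin_cases a <;> fin_cases b <;>
      simp only [Matrix.adjugate_fin_three, Matrix.of_apply, Matrix.cons_val_zero,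
        Matrix.cons_val_one, Matrix.head_cons, Matrix.cons_val_two, Matrix.tail_cons,
        Matrix.head_fin_const, Fin.isValue] <;>
      repeat' first
      | apply Sm.sub | apply Sm.add | apply Sm.mul | apply Sm.neg | exact hgb' _ _
  have hginv : ∀ a b : Fin 3, Sm U (ginv gb a b) := by
    intro a b
    have e : ginv gb a b
        = fun y => ((Matrix.of fun c d => gb c d y).det)⁻¹
            * (Matrix.of fun c d => gb c d y).adjugate a b := by
      funext y
      show (Matrix.of fun c d => gb c d y)⁻¹ a b = _
      rw [Matrix.inv_def, Matrix.smul_apply, Ring.inverse_eq_inv, smul_eq_mul]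
    rw [e]
    exact (hdet.inv hdetne).mul (hadj a b)
  have hvort : ∀ a b : Fin 3, Sm U (vort (Acoef Φ ξ) a b) := fun a b => Sm_vort hU hA a b
  have hKt : ∀ a b : Fin 3, Sm U (Kt Φ (Acoef Φ ξ) gb a b) := by
    intro a b
    exact (Sm.const_mul ((hgb' a b).pd hU 0)).add ((hΦ'.pow 2).mul (hvort a b))
  have hKm : ∀ a b : Fin 3, Sm U (Km Φ (Acoef Φ ξ) gb a b) := by
    intro a b
    exact Sm_sum3 (fun m => (hginv a m).mul (hKt m b))
  have hGamb : ∀ k a b : Fin 3, Sm U (Gamb (Acoef Φ ξ) gb k a b) := by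
    intro k a b
    exact Sm.const_mul (Sm_sum3 fun m => (hginv k m).mul
      (((Sm_sd hU hA (hgb' m b) a).add (Sm_sd hU hA (hgb' m a) b)).sub
        (Sm_sd hU hA (hgb' a b) m)))
  have hgb_symm : ∀ a b : Fin 3, Set.EqOn (gb a b) (gb b a) U := by
    intro a b y hy
    have h1 := (hpos y hy).1
    have h2 := congrFun (congrFun h1 b) a
    simpa using h2
  have hGamb_symm : ∀ k a b, Set.EqOn (Gamb (Acoef Φ ξ) gb k a b)
      (Gamb (Acoef Φ ξ) gb k b a) U := by
    intro k a b y hy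
    unfold Gamb
    congr 1
    refine Finset.sum_congr rfl fun m _ => ?_
    rw [sd_congr hU (hgb_symm a b) m hy]
    ring
  have hHf : ∀ k a b, Sm U ((fun k a b y => (1/2 : ℝ) * Gamb (Acoef Φ ξ) gb k a b y) k a b) :=
    fun k a b => Sm.const_mul (hGamb k a b)
  have hsym : ∀ k a b, Set.EqOn (Gamb (Acoef Φ ξ) gb k a b)
      (GP (fun k a b y => (1/2 : ℝ) * Gamb (Acoef Φ ξ) gb k a b y) k a b) U := by
    intro k a b y hy
    show Gamb (Acoef Φ ξ) gb k a b y
      = (1/2 : ℝ) * Gamb (Acoef Φ ξ) gb k a b y + (1/2 : ℝ) * Gamb (Acoef Φ ξ) gb k b a y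
    rw [show Gamb (Acoef Φ ξ) gb k b a y = Gamb (Acoef Φ ξ) gb k a b y from hGamb_symm k b a hy]
    ring
  have e1 : barRcov0 Φ (Acoef Φ ξ) gb l h i j x
      = barRcov0P (Acoef Φ ξ) (GP (fun k a b y => (1/2 : ℝ) * Gamb (Acoef Φ ξ) gb k a b y))
          (Km Φ (Acoef Φ ξ) gb) l h i j x :=
    barRcov0P_congr hU hsym l h i j hx
  have e2 : barR0cov Φ (Acoef Φ ξ) gb l h i j x
      = barR0covP (Acoef Φ ξ) (GP (fun k a b y => (1/2 : ℝ) * Gamb (Acoef Φ ξ) gb k a b y))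
          (Km Φ (Acoef Φ ξ) gb) l h i j x :=
    barR0covP_congr hU hsym l h i j hx
  have e3 : barR0cov Φ (Acoef Φ ξ) gb l h j i x
      = barR0covP (Acoef Φ ξ) (GP (fun k a b y => (1/2 : ℝ) * Gamb (Acoef Φ ξ) gb k a b y))
          (Km Φ (Acoef Φ ξ) gb) l h j i x :=
    barR0covP_congr hU hsym l h j i hx
  have e4 : ∀ p q r s : Fin 3, barR Φ (Acoef Φ ξ) gb p q r s x
      = barRP (Acoef Φ ξ) (GP (fun k a b y => (1/2 : ℝ) * Gamb (Acoef Φ ξ) gb k a b y))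
          (Km Φ (Acoef Φ ξ) gb) p q r s x :=
    fun p q r s => barRP_congr hU hsym p q r s hx
  have e5 : ∀ p q r : Fin 3, barR0 Φ (Acoef Φ ξ) gb p q r x
      = barR0P (Acoef Φ ξ) (GP (fun k a b y => (1/2 : ℝ) * Gamb (Acoef Φ ξ) gb k a b y))
          (Km Φ (Acoef Φ ξ) gb) p q r x :=
    fun p q r => barR0P_congr hU hsym p q r hx
  rw [e1, e2, e3]
  simp only [e4, e5]
  exact keyP hU hA hHf hKm hx l h i j

end main

/-- equation (3.15): second (temporal) Bianchi identity for the
Riemannian spatial connection: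
`R̄^l_{h ij|0} + R̄^l_{h 0i|j} − R̄^l_{h 0j|i} + R̄^l_{h ik} K^k_j − R̄^l_{h jk} K^k_i
  + a_j R̄^l_{h 0i} − a_i R̄^l_{h 0j} = 0`. -/
theorem stmt_8 (U : Set Pt) (hU : IsOpen U)
    (Φ : SF) (ξ : Fin 3 → SF) (gb : Fin 3 → Fin 3 → SF)
    (hΦ : ContDiffOn ℝ (⊤ : ℕ∞) Φ U) (hΦ0 : ∀ x ∈ U, Φ x ≠ 0)
    (hξ : ∀ i, ContDiffOn ℝ (⊤ : ℕ∞) (ξ i) U)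
    (hgb : ∀ i j, ContDiffOn ℝ (⊤ : ℕ∞) (gb i j) U)
    (hpos : ∀ x ∈ U, (Matrix.of fun i j => gb i j x).PosDef) :
    ∀ x ∈ U, ∀ l h i j : Fin 3,
      barRcov0 Φ (Acoef Φ ξ) gb l h i j x
        + barR0cov Φ (Acoef Φ ξ) gb l h i j x
        - barR0cov Φ (Acoef Φ ξ) gb l h j i x
        + (∑ k, (barR Φ (Acoef Φ ξ) gb l h i k x * Km Φ (Acoef Φ ξ) gb k j x
            - barR Φ (Acoef Φ ξ) gb l h j k x * Km Φ (Acoef Φ ξ) gb k i x))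
        + aco (Acoef Φ ξ) j x * barR0 Φ (Acoef Φ ξ) gb l h i x
        - aco (Acoef Φ ξ) i x * barR0 Φ (Acoef Φ ξ) gb l h j x = 0 := by
  exact stmt8_aux U hU Φ ξ gb hΦ hΦ0 hξ hgb hpos
end
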